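/- Let S be a gr-C-2^A-secondary submodule of M and let I be a graded ideal of Γ with I ⊄ Ann_Γ(S). Then IS is a gr-C-2^A-secondary submodule of M. -/

import Mathlib

open Pointwise DirectSum

section Preliminaries

variable {G : Type*} [AddGroup G] [DecidableEq G]
variable {Γ : Type*} [CommRing Γ]
variable {M : Type*} [AddCommGroup M] [Module Γ M]

/-- `x` lies in the graded radical `Gr I`: for homogeneous `x` this is the defining
condition that some positive power of `x` lies in `I`. -/
def grMem (I : Ideal Γ) (x : Γ) : Prop := ∃ n : ℕ, 0 < n ∧ x ^ n ∈ I

variable (𝒜 : G → AddSubgroup Γ) (ℳ : G → AddSubgroup M)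
variable [GradedRing 𝒜] [DirectSum.Decomposition ℳ] [SetLike.GradedSMul 𝒜 ℳ]

/-- A graded submodule: closed under taking homogeneous components. -/
def IsGradedSubmodule (S : Submodule Γ M) : Prop :=
  ∀ (g : G) ⦃x : M⦄, x ∈ S → (DirectSum.decompose ℳ x g : M) ∈ S

/-- A graded ideal: closed under taking homogeneous components. -/
def IsGradedIdeal (I : Ideal Γ) : Prop :=
  ∀ (g : G) ⦃x : Γ⦄, x ∈ I → (DirectSum.decompose 𝒜 x g : Γ) ∈ I

/-- A graded classical 2-absorbing secondary (gr-C-2^A-secondary) submodule: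
a nonzero graded submodule `S` such that whenever `r, s` are homogeneous and `L` is a
graded submodule with `r*s • S ⊆ L`, either `r • S ⊆ L`, or `s • S ⊆ L`, or
`r*s ∈ Gr(Ann S)`. -/
def IsGrC2ASecondary (S : Submodule Γ M) : Prop :=
  S ≠ ⊥ ∧ IsGradedSubmodule ℳ S ∧
    ∀ r s : Γ, SetLike.IsHomogeneousElem 𝒜 r → SetLike.IsHomogeneousElem 𝒜 s →
      ∀ L : Submodule Γ M, IsGradedSubmodule ℳ L →
        (r * s) • S ≤ L →
          r • S ≤ L ∨ s • S ≤ L ∨ grMem S.annihilator (r * s)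

end Preliminaries

/-! For a graded ideal `I` and a graded submodule `L`, the residual `L :_M I = {m | I m ⊆ L}` is
graded, because `(a m)_{i+g} = a m_g` for `a ∈ Γ_i`. Since `r (I S) = I (r S)`, an inclusion
`rs (I S) ⊆ L` is the inclusion `rs S ⊆ L :_M I`, to which the defining property of `S` applies;
its three outcomes give those for `I S`, using `Ann S ⊆ Ann (I S)`. -/

section

variable {G : Type*} [AddGroup G] [DecidableEq G]
variable {Γ : Type*} [CommRing Γ]
variable {M : Type*} [AddCommGroup M] [Module Γ M]

namespace Submodule

def residual (L : Submodule Γ M) (I : Ideal Γ) : Submodule Γ M where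
  carrier := {m | ∀ a ∈ I, a • m ∈ L}
  add_mem' hx hy a ha := by rw [smul_add]; exact L.add_mem (hx a ha) (hy a ha)
  zero_mem' a _ := by rw [smul_zero]; exact L.zero_mem
  smul_mem' c m hm a ha := by rw [smul_comm]; exact L.smul_mem c (hm a ha)

theorem smul_le_iff_le_residual {I : Ideal Γ} {N L : Submodule Γ M} :
    I • N ≤ L ↔ N ≤ L.residual I :=
  smul_le.trans ⟨fun h _ hn a ha => h a ha _ hn, fun h a ha _ hn => h hn a ha⟩

theorem pointwise_smul_ideal_smul_comm (r : Γ) (I : Ideal Γ) (N : Submodule Γ M) :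
    r • (I • N) = I • (r • N) := by
  rw [← ideal_span_singleton_smul, ← ideal_span_singleton_smul, ← Submodule.smul_assoc,
    ← Submodule.smul_assoc, smul_eq_mul, smul_eq_mul, mul_comm]

end Submodule

theorem grMem.mono {I J : Ideal Γ} (hIJ : I ≤ J) {x : Γ} (hx : grMem I x) : grMem J x :=
  let ⟨n, hn, hxn⟩ := hx; ⟨n, hn, hIJ hxn⟩

variable {𝒜 : G → AddSubgroup Γ} (ℳ : G → AddSubgroup M)
variable [DirectSum.Decomposition ℳ] [SetLike.GradedSMul 𝒜 ℳ]

theorem coe_decompose_smul_add_of_left_mem {i : G} {a : Γ} (ha : a ∈ 𝒜 i) (m : M) (g : G) :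
    (decompose ℳ (a • m) (i + g) : M) = a • (decompose ℳ m g : M) := by
  induction m using DirectSum.Decomposition.inductionOn ℳ with
  | zero => simp
  | @homogeneous h m =>
    have ham : a • (m : M) ∈ ℳ (i + h) := SetLike.GradedSMul.smul_mem ha m.2
    by_cases hhg : h = g
    · subst hhg
      rw [decompose_of_mem_same ℳ ham, decompose_of_mem_same ℳ m.2]
    · rw [decompose_of_mem_ne ℳ ham (by simpa using hhg), decompose_of_mem_ne ℳ m.2 hhg,
        smul_zero]
  | add x y hx hy => simp [smul_add, decompose_add, hx, hy]

variable [GradedRing 𝒜]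

theorem IsGradedSubmodule.residual {L : Submodule Γ M} (hL : IsGradedSubmodule ℳ L)
    {I : Ideal Γ} (hI : IsGradedIdeal 𝒜 I) : IsGradedSubmodule ℳ (L.residual I) := by
  classical
  intro g m hm a ha
  rw [← sum_support_decompose 𝒜 a, Finset.sum_smul]
  refine Submodule.sum_mem _ fun i _ => ?_
  rw [← coe_decompose_smul_add_of_left_mem ℳ (SetLike.coe_mem _)]
  exact hL _ (hm _ (hI i ha))

theorem IsGradedSubmodule.ideal_smul {S : Submodule Γ M} (hS : IsGradedSubmodule ℳ S)
    {I : Ideal Γ} (hI : IsGradedIdeal 𝒜 I) : IsGradedSubmodule ℳ (I • S) := by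
  classical
  intro g x hx
  induction hx using Submodule.smul_induction_on' with
  | smul a ha m hm =>
    rw [← sum_support_decompose 𝒜 a, Finset.sum_smul, decompose_sum]
    simp only [DirectSum.sum_apply, AddSubgroup.val_finsetSum]
    refine Submodule.sum_mem _ fun i _ => ?_
    rw [← add_neg_cancel_left i g, coe_decompose_smul_add_of_left_mem ℳ (SetLike.coe_mem _)]
    exact Submodule.smul_mem_smul (hI i ha) (hS _ hm)
  | add x _ y _ hx hy => simpa [decompose_add] using add_mem hx hy

end

variable {G : Type*} [AddGroup G] [DecidableEq G]
variable {Γ : Type*} [CommRing Γ]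
variable {M : Type*} [AddCommGroup M] [Module Γ M]
variable (𝒜 : G → AddSubgroup Γ) (ℳ : G → AddSubgroup M)
variable [GradedRing 𝒜] [DirectSum.Decomposition ℳ] [SetLike.GradedSMul 𝒜 ℳ]

/-- If `S` is a gr-C-2^A-secondary submodule of `M` and `I` is a graded ideal of `Γ`
with `I ⊄ Ann S`, then `I • S` is a gr-C-2^A-secondary submodule of `M`. -/
theorem stmt9 (S : Submodule Γ M) (hS : IsGrC2ASecondary 𝒜 ℳ S)
    (I : Ideal Γ) (hI : IsGradedIdeal 𝒜 I) (hIS : ¬ I ≤ S.annihilator) :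
    IsGrC2ASecondary 𝒜 ℳ (I • S) := by
  obtain ⟨-, hSg, hSsec⟩ := hS
  refine ⟨fun h => hIS (Submodule.le_annihilator_iff.mpr h), hSg.ideal_smul ℳ hI,
    fun r s hr hs L hL hrsL => ?_⟩
  simp only [Submodule.pointwise_smul_ideal_smul_comm, Submodule.smul_le_iff_le_residual] at hrsL ⊢
  exact (hSsec r s hr hs _ (hL.residual ℳ hI) hrsL).imp_right <| Or.imp_right <|
    grMem.mono <| Submodule.annihilator_mono Submodule.smul_le_right
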